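/- arXiv:1311.1833 — 3 statements merged into one kernel-verified Lean document; each statement's English description precedes it below -/
import Mathlib

section
/- Let ℓ ≥ 1, m ≥ 1 and N₀ ≥ ℓ be integers, and for k = ℓ+1, …, N₀+1 let S_k : ℂ → ℂ be polynomials of degree at most m−1. Then the open set Ω' = {ζ = (ζ₁, …, ζ_{ℓ+1}) ∈ ℂ^{ℓ+1} : |ζ₁|^{2m} − Σ_{k=ℓ+1}^{N₀+1} |S_k(ζ₁)|² + Σ_{i=2}^{ℓ+1} |ζ_i|^{2m} > 0} is connected. -/
/-!
Write `Ω'` as `{ζ | F ζ < ‖ζ₂‖ ^ (2m)}`, where the continuous function `F` does not involve the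
coordinate `ζ₂`. Enlarging `‖ζ₂‖` keeps a point in `Ω'`, and `{w : ℂ | r ≤ ‖w‖}` is path
connected, so every point of `Ω'` is joined inside `Ω'` to the point with `ζ₂` replaced by any
real `C ≥ ‖ζ₂‖`. Two points with `ζ₂ = C` are then joined by moving the other coordinates along
any path, as soon as `C ^ (2m)` exceeds the maximum of `F` on that (compact) path.
-/

open Set Filter

theorem isPathConnected_setOf_le_norm {V : Type*} [NormedAddCommGroup V] [NormedSpace ℝ V]
    (hV : 1 < Module.rank ℝ V) (r : ℝ) : IsPathConnected {w : V | r ≤ ‖w‖} := by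
  rcases le_or_gt r 0 with hr | hr
  · convert isPathConnected_univ (X := V)
    exact eq_univ_of_forall fun w => hr.trans (norm_nonneg w)
  have hpolar :
      (fun p : V × ℝ => p.2 • p.1) '' (Metric.sphere 0 1 ×ˢ Ici r) = {w | r ≤ ‖w‖} := by
    ext w
    constructor
    · rintro ⟨⟨u, t⟩, ⟨hu, ht⟩, rfl⟩
      simp_all [norm_smul, abs_of_pos (hr.trans_le ht)]
    · intro hw
      have hw0 : ‖w‖ ≠ 0 := (hr.trans_le hw).ne'
      exact ⟨(‖w‖⁻¹ • w, ‖w‖), ⟨by simp [norm_smul, hw0], hw⟩, by simp [smul_smul, hw0]⟩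
  rw [← hpolar]
  exact ((isPathConnected_sphere hV 0 zero_le_one).prod
    ((convex_Ici r).isPathConnected nonempty_Ici)).image (by fun_prop)

section

variable {V X : Type*} [NormedAddCommGroup V] [NormedSpace ℝ V] [TopologicalSpace X]
  {F : X → ℝ} {k : ℕ}

theorem joinedIn_setOf_lt_norm_pow_smul (hV : 1 < Module.rank ℝ V) {u : V} (hu : ‖u‖ = 1)
    {p : V × X} (hp : F p.2 < ‖p.1‖ ^ k) {C : ℝ} (hC : ‖p.1‖ ≤ C) :
    JoinedIn {q : V × X | F q.2 < ‖q.1‖ ^ k} p (C • u, p.2) := by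
  have hpath : JoinedIn {w : V | ‖p.1‖ ≤ ‖w‖} p.1 (C • u) :=
    (isPathConnected_setOf_le_norm hV _).joinedIn _ (le_refl ‖p.1‖) _
      (by simpa [norm_smul, hu, abs_of_nonneg ((norm_nonneg _).trans hC)] using hC)
  refine (hpath.map (f := fun w => (w, p.2)) (by fun_prop)).mono ?_
  rintro _ ⟨w, hw, rfl⟩
  exact hp.trans_le (pow_le_pow_left₀ (norm_nonneg _) hw k)

theorem isPathConnected_setOf_lt_norm_pow (hV : 1 < Module.rank ℝ V) [PathConnectedSpace X]
    (hF : Continuous F) (hk : k ≠ 0) : IsPathConnected {p : V × X | F p.2 < ‖p.1‖ ^ k} := by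
  have : Nontrivial V := rank_pos_iff_nontrivial.mp (zero_lt_one.trans hV)
  obtain ⟨u, hu⟩ := exists_norm_eq V zero_le_one
  have hnorm {C : ℝ} (hC : 0 ≤ C) : ‖C • u‖ = C := by
    rw [norm_smul, hu, mul_one, Real.norm_of_nonneg hC]
  have hlarge (M : ℝ) : ∀ᶠ C in atTop, 0 ≤ C ∧ M < C ^ k :=
    (eventually_ge_atTop 0).and ((tendsto_pow_atTop hk).eventually_gt_atTop M)
  rw [isPathConnected_iff]
  constructor
  · obtain ⟨x⟩ := ‹PathConnectedSpace X›.nonempty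
    obtain ⟨C, hC0, hC⟩ := (hlarge (F x)).exists
    exact ⟨(C • u, x), by simpa [hnorm hC0] using hC⟩
  · intro x hx y hy
    let γ := PathConnectedSpace.somePath x.2 y.2
    obtain ⟨M, hM⟩ := (isCompact_range γ.continuous).bddAbove_image hF.continuousOn
    obtain ⟨C, ⟨hC0, hMC⟩, hxC, hyC⟩ :=
      ((hlarge M).and ((eventually_ge_atTop ‖x.1‖).and (eventually_ge_atTop ‖y.1‖))).exists
    have hfar : JoinedIn {q : V × X | F q.2 < ‖q.1‖ ^ k} (C • u, x.2) (C • u, y.2) := by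
      refine ⟨(Path.refl (C • u)).prod γ, fun t => ?_⟩
      show F (γ t) < ‖C • u‖ ^ k
      rw [hnorm hC0]
      exact (hM ⟨γ t, mem_range_self t, rfl⟩).trans_lt hMC
    exact ((joinedIn_setOf_lt_norm_pow_smul hV hu hx hxC).trans hfar).trans
      (joinedIn_setOf_lt_norm_pow_smul hV hu hy hyC).symm

end

theorem stmt3_general (ℓ m N₀ : ℕ) (hℓ : 1 ≤ ℓ) (hm : 1 ≤ m)
    (S : Fin (N₀ + 1 - ℓ) → Polynomial ℂ) :
    IsConnected {ζ : Fin (ℓ + 1) → ℂ |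
      0 < ‖ζ 0‖ ^ (2 * m)
          - (∑ k : Fin (N₀ + 1 - ℓ), ‖(S k).eval (ζ 0)‖ ^ 2)
          + ∑ i : Fin ℓ, ‖ζ i.succ‖ ^ (2 * m)} := by
  obtain ⟨n, rfl⟩ := Nat.exists_eq_add_of_le' hℓ
  let F : (Fin (n + 1) → ℂ) → ℝ := fun w =>
    ∑ k, ‖(S k).eval (w 0)‖ ^ 2 - ‖w 0‖ ^ (2 * m) - ∑ j : Fin n, ‖w j.succ‖ ^ (2 * m)
  have hF : Continuous F := by fun_prop
  have hΩ' : IsPathConnected {p : ℂ × (Fin (n + 1) → ℂ) | F p.2 < ‖p.1‖ ^ (2 * m)} :=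
    isPathConnected_setOf_lt_norm_pow (by rw [Complex.rank_real_complex]; norm_num) hF (by omega)
  have hmem (ζ : Fin (n + 1 + 1) → ℂ) :
      (0 < ‖ζ 0‖ ^ (2 * m) - (∑ k, ‖(S k).eval (ζ 0)‖ ^ 2)
          + ∑ i : Fin (n + 1), ‖ζ i.succ‖ ^ (2 * m)) ↔ F ((1 : Fin (n + 2)).removeNth ζ) < ‖ζ 1‖ ^ (2 * m) := by
    simp only [F, Fin.removeNth, Fin.sum_univ_succ (n := n), Fin.succ_zero_eq_one,
      Fin.succAbove_ne_zero_zero one_ne_zero, Fin.one_succAbove_succ]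
    constructor <;> intro h <;> linarith
  refine IsPathConnected.isConnected ?_
  convert hΩ'.image (f := fun p => (1 : Fin (n + 2)).insertNth (α := fun _ => ℂ) p.1 p.2)
    (by fun_prop)
  ext ζ
  constructor
  · exact fun hζ => ⟨(ζ 1, Fin.removeNth 1 ζ), (hmem ζ).1 hζ, Fin.insertNth_self_removeNth 1 ζ⟩
  · rintro ⟨⟨z, w⟩, hzw, rfl⟩
    rwa [mem_ofPred_eq, hmem, Fin.insertNth_apply_same, Fin.removeNth_insertNth]

/-- Let `ℓ ≥ 1`, `m ≥ 1`, `N₀ ≥ ℓ` be integers and, for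
`k = ℓ+1, …, N₀+1`, let `S k : ℂ → ℂ` be polynomials of degree at most `m-1`.  Then the
open set
`Ω' = {ζ ∈ ℂ^{ℓ+1} : |ζ 0|^{2m} - ∑_k |S k (ζ 0)|² + ∑_{i=2}^{ℓ+1} |ζ i|^{2m} > 0}`
is connected. -/
theorem stmt3 (ℓ m N₀ : ℕ) (hℓ : 1 ≤ ℓ) (hm : 1 ≤ m) (hN₀ : ℓ ≤ N₀)
    (S : Fin (N₀ + 1 - ℓ) → Polynomial ℂ)
    (hS : ∀ k, (S k).degree ≤ ((m - 1 : ℕ) : WithBot ℕ)) :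
    IsConnected {ζ : Fin (ℓ + 1) → ℂ |
      0 < ‖ζ 0‖ ^ (2 * m)
          - (∑ k : Fin (N₀ + 1 - ℓ), ‖(S k).eval (ζ 0)‖ ^ 2)
          + ∑ i : Fin ℓ, ‖ζ i.succ‖ ^ (2 * m)} :=
  stmt3_general ℓ m N₀ hℓ hm S
end

section
/- Let D ⊆ ℂ^n be a nonempty connected open set, let a ≥ b ≥ 1 be integers, and let f = (f₁, …, f_a) : D → ℂ^a and g = (g₁, …, g_b) : D → ℂ^b be holomorphic maps such that Σ_{i=1}^{a} |f_i(z)|² = Σ_{j=1}^{b} |g_j(z)|² for all z ∈ D. Then there exists a unitary a × a matrix U such that f(z) = U · (g₁(z), …, g_b(z), 0, …, 0)ᵀ for all z ∈ D. -/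
/-!
The kernel `K z w = ⟪f w, f z⟫ - ⟪g w, g z⟫` is holomorphic in `z`, antiholomorphic in `w`, and
vanishes on the diagonal. Given `z, w` in a convex open set, the complex line `μ ↦ X + μ • Y`
through `z = X + I • Y` and `w = X - I • Y` makes `μ ↦ K (X + μ • Y) (X + conj μ • Y)`
holomorphic; it vanishes for real `μ`, hence at `μ = I`. So `K` vanishes near the diagonal, and
then on all of `D × D` by the identity theorem in the first variable. Consequently `f` and the
zero-padded `g` have the same Gram kernel, so `g z ↦ f z` extends to a linear isometry of `ℂ^a`,
whose matrix is the required unitary.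
-/

open Metric Filter Topology Set ComplexConjugate Matrix
open scoped InnerProductSpace

section IdentityTheorem

variable {E F : Type*} [NormedAddCommGroup E] [NormedSpace ℂ E]
  [NormedAddCommGroup F] [NormedSpace ℂ F] [CompleteSpace F] {h : E → F}

theorem DifferentiableOn.eqOn_zero_of_convex_of_eventuallyEq_zero {U : Set E}
    (hd : DifferentiableOn ℂ h U) (hU : IsOpen U) (hUc : Convex ℝ U) {q : E} (hq : q ∈ U)
    (h0 : h =ᶠ[𝓝 q] 0) : EqOn h 0 U := by
  intro p hp
  set line : ℂ → E := fun ζ => q + ζ • (p - q)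
  have hline : Continuous line := by fun_prop
  have hV : IsOpen (line ⁻¹' U) := hU.preimage hline
  have hVc : Convex ℝ (line ⁻¹' U) := (hUc.translate_preimage_right q).is_linear_preimage
    ⟨fun x y => add_smul x y _, fun c x => smul_assoc c x _⟩
  have hφ : AnalyticOnNhd ℂ (h ∘ line) (line ⁻¹' U) :=
    (hd.comp (by fun_prop) (mapsTo_preimage _ _)).analyticOnNhd hV
  have hφ0 : (h ∘ line) =ᶠ[𝓝 0] 0 := by
    have : Tendsto line (𝓝 0) (𝓝 q) := by
      simpa [line] using hline.tendsto 0
    exact this.eventually h0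
  have := hφ.eqOn_zero_of_preconnected_of_eventuallyEq_zero hVc.isPreconnected
    (by simpa [line] using hq) hφ0 (x := 1) (by simpa [line] using hp)
  simpa [line] using this

theorem DifferentiableOn.eqOn_zero_of_isPreconnected_of_eventuallyEq_zero {U : Set E}
    (hd : DifferentiableOn ℂ h U) (hU : IsOpen U) (hUc : IsPreconnected U) {z₀ : E}
    (hz₀ : z₀ ∈ U) (h0 : h =ᶠ[𝓝 z₀] 0) : EqOn h 0 U := by
  set Z : Set E := {p | h =ᶠ[𝓝 p] 0}
  have hZ : IsOpen Z := isOpen_setOfPred_eventually_nhds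
  suffices U ⊆ Z from fun p hp => (this hp).self_of_nhds
  refine hUc.subset_of_closure_inter_subset hZ ⟨z₀, hz₀, h0⟩ ?_
  rintro p ⟨hpZ, hpU⟩
  obtain ⟨r, hr, hrU⟩ := Metric.isOpen_iff.1 hU p hpU
  obtain ⟨q, hqZ, hq⟩ := Metric.mem_closure_iff.1 hpZ r hr
  have hball := (hd.mono hrU).eqOn_zero_of_convex_of_eventuallyEq_zero isOpen_ball
    (convex_ball p r) (mem_ball'.2 hq) hqZ
  exact eventually_of_mem (ball_mem_nhds p hr) hball

end IdentityTheorem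

section Polarization

variable {ι : Type*} [Fintype ι]

theorem DifferentiableAt.dotProduct_star_comp_conj {F : ℂ → ι → ℂ} {ζ : ℂ}
    (h₁ : DifferentiableAt ℂ F ζ) (h₂ : DifferentiableAt ℂ F (conj ζ)) :
    DifferentiableAt ℂ (fun μ => F μ ⬝ᵥ star (F (conj μ))) ζ := by
  have h₃ : DifferentiableAt ℂ (star ∘ F ∘ conj) ζ := by
    simpa using h₂.star_conj
  simp only [dotProduct]
  exact DifferentiableAt.fun_sum fun i _ =>
    (differentiableAt_pi.1 h₁ i).mul (differentiableAt_pi.1 h₃ i)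

variable {κ E : Type*} [Fintype κ] [NormedAddCommGroup E] [NormedSpace ℂ E]
  {f : E → ι → ℂ} {g : E → κ → ℂ}

theorem dotProduct_star_eq_of_convex {B : Set E} (hB : IsOpen B) (hBc : Convex ℝ B)
    (hf : DifferentiableOn ℂ f B) (hg : DifferentiableOn ℂ g B)
    (h : ∀ z ∈ B, f z ⬝ᵥ star (f z) = g z ⬝ᵥ star (g z)) {z w : E} (hz : z ∈ B) (hw : w ∈ B) :
    f z ⬝ᵥ star (f w) = g z ⬝ᵥ star (g w) := by
  set X : E := (2 : ℂ)⁻¹ • (z + w)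
  set Y : E := (-Complex.I / 2) • (z - w)
  set line : ℂ → E := fun μ => X + μ • Y
  have hline : Continuous line := by fun_prop
  have hlinez : line Complex.I = z := by
    simp only [line, X, Y]
    rw [smul_smul, show Complex.I * (-Complex.I / 2) = 2⁻¹ by
      rw [mul_div_assoc', mul_neg, Complex.I_mul_I]; norm_num]
    module
  have hlinew : line (-Complex.I) = w := by
    simp only [line, X, Y]
    rw [smul_smul, show -Complex.I * (-Complex.I / 2) = -2⁻¹ by
      rw [mul_div_assoc', neg_mul_neg, Complex.I_mul_I]; norm_num]
    module
  set V : Set ℂ := line ⁻¹' B ∩ (line ∘ conj) ⁻¹' B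
  have hV : IsOpen V :=
    (hB.preimage hline).inter (hB.preimage (hline.comp Complex.continuous_conj))
  have hVc : Convex ℝ V := by
    refine ((hBc.translate_preimage_right X).is_linear_preimage ?_).inter
      ((hBc.translate_preimage_right X).is_linear_preimage ?_)
    · exact ⟨fun x y => add_smul x y Y, fun c x => smul_assoc c x Y⟩
    · exact ⟨fun x y => by simp [add_smul], fun c x => by simp [mul_smul, Complex.coe_smul]⟩
  have hI : Complex.I ∈ V := ⟨by simpa [hlinez], by simpa [hlinew]⟩
  have hmI : -Complex.I ∈ V := ⟨by simpa [hlinew], by simpa [hlinez]⟩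
  have h0 : (0 : ℂ) ∈ V := by
    simpa using hVc hI hmI (by norm_num : (0 : ℝ) ≤ 1 / 2) (by norm_num : (0 : ℝ) ≤ 1 / 2)
      (by norm_num)
  have hfline : ∀ ν, line ν ∈ B → DifferentiableAt ℂ (f ∘ line) ν :=
    fun ν hν => (hf.differentiableAt (hB.mem_nhds hν)).comp ν (by fun_prop)
  have hgline : ∀ ν, line ν ∈ B → DifferentiableAt ℂ (g ∘ line) ν :=
    fun ν hν => (hg.differentiableAt (hB.mem_nhds hν)).comp ν (by fun_prop)
  set ψ : ℂ → ℂ := fun μ => (f (line μ) ⬝ᵥ star (f (line (conj μ)))) -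
    g (line μ) ⬝ᵥ star (g (line (conj μ)))
  have hψ : AnalyticOnNhd ℂ ψ V := by
    refine DifferentiableOn.analyticOnNhd (fun μ hμ => DifferentiableAt.differentiableWithinAt ?_) hV
    exact ((hfline μ hμ.1).dotProduct_star_comp_conj (hfline _ hμ.2)).sub
      ((hgline μ hμ.1).dotProduct_star_comp_conj (hgline _ hμ.2))
  -- for real `μ` both points equal `line μ`, so `ψ μ` is a difference of squared norms
  have hψ_real : ∃ᶠ μ in 𝓝[≠] 0, ψ μ = 0 := by
    have hreal : Tendsto (fun t : ℝ => (t : ℂ)) (𝓝[≠] 0) (𝓝[≠] 0) :=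
      Complex.continuous_ofReal.continuousWithinAt.tendsto_nhdsWithin fun t ht => by simpa using ht
    refine hreal.frequently (Eventually.frequently ?_)
    filter_upwards [hreal.eventually (nhdsWithin_le_nhds (hV.mem_nhds h0))] with t ht
    simp [ψ, Complex.conj_ofReal, h _ ht.1]
  have := hψ.eqOn_zero_of_preconnected_of_frequently_eq_zero hVc.isPreconnected h0 hψ_real hI
  simpa [ψ, hlinez, hlinew, sub_eq_zero] using this

theorem dotProduct_star_eq_of_isPreconnected {D : Set E} (hD : IsOpen D) (hDc : IsPreconnected D)
    (hf : DifferentiableOn ℂ f D) (hg : DifferentiableOn ℂ g D)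
    (h : ∀ z ∈ D, f z ⬝ᵥ star (f z) = g z ⬝ᵥ star (g z)) {z w : E} (hz : z ∈ D) (hw : w ∈ D) :
    f z ⬝ᵥ star (f w) = g z ⬝ᵥ star (g w) := by
  obtain ⟨r, hr, hrD⟩ := Metric.isOpen_iff.1 hD w hw
  set K : E → ℂ := fun ζ => f ζ ⬝ᵥ star (f w) - g ζ ⬝ᵥ star (g w)
  have hK : DifferentiableOn ℂ K D := by
    simp only [K, dotProduct]
    exact .sub (.fun_sum fun i _ => (differentiableOn_pi.1 hf i).mul_const _)
      (.fun_sum fun j _ => (differentiableOn_pi.1 hg j).mul_const _)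
  have hKw : K =ᶠ[𝓝 w] 0 := by
    filter_upwards [ball_mem_nhds w hr] with ζ hζ
    simpa [K, sub_eq_zero] using dotProduct_star_eq_of_convex isOpen_ball (convex_ball w r)
      (hf.mono hrD) (hg.mono hrD) (fun z hz => h z (hrD hz)) hζ (mem_ball_self hr)
  simpa [K, sub_eq_zero] using hK.eqOn_zero_of_isPreconnected_of_eventuallyEq_zero hD hDc hw hKw hz

end Polarization

section GramMatrix

variable {𝕜 V X : Type*} [RCLike 𝕜] [NormedAddCommGroup V] [InnerProductSpace 𝕜 V]

theorem exists_linearIsometryEquiv_apply_eq_of_inner_eq [FiniteDimensional 𝕜 V] {u v : X → V}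
    (h : ∀ x y, ⟪u x, u y⟫_𝕜 = ⟪v x, v y⟫_𝕜) : ∃ U : V ≃ₗᵢ[𝕜] V, ∀ x, U (v x) = u x := by
  classical
  set L := Finsupp.linearCombination 𝕜 v
  set M := Finsupp.linearCombination 𝕜 u
  have hnorm : ∀ c, ‖M c‖ = ‖L c‖ := fun c => by
    rw [norm_eq_sqrt_re_inner (𝕜 := 𝕜), norm_eq_sqrt_re_inner (𝕜 := 𝕜)]
    simp only [M, L, Finsupp.linearCombination_apply, Finsupp.sum, sum_inner, inner_sum,
      inner_smul_left, inner_smul_right, h]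
  have hker : LinearMap.ker L ≤ LinearMap.ker M := fun c hc => by
    simpa [← norm_eq_zero, hnorm] using hc
  set T : LinearMap.range L →ₗ[𝕜] V :=
    (LinearMap.ker L).liftQ M hker ∘ₗ (LinearMap.quotKerEquivRange L).symm.toLinearMap
  have hT : ∀ c, T ⟨L c, LinearMap.mem_range_self L c⟩ = M c := fun c => by
    have : LinearMap.quotKerEquivRange L (Submodule.Quotient.mk c) =
        ⟨L c, LinearMap.mem_range_self L c⟩ :=
      Subtype.ext (LinearMap.quotKerEquivRange_apply_mk L c)
    simp [T, ← this]
  set Tiso : LinearMap.range L →ₗᵢ[𝕜] V := ⟨T, by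
    rintro ⟨_, c, rfl⟩
    rw [hT, hnorm]
    rfl⟩
  refine ⟨Tiso.extend.toLinearIsometryEquiv rfl, fun x => ?_⟩
  have hx : v x = L (Finsupp.single x 1) := by simp [L]
  calc Tiso.extend (v x) = Tiso.extend (⟨L (Finsupp.single x 1), LinearMap.mem_range_self L _⟩ :
          LinearMap.range L) := by rw [hx]
    _ = M (Finsupp.single x 1) := (Tiso.extend_apply _).trans (hT _)
    _ = u x := by simp [M]

end GramMatrix

theorem LinearIsometryEquiv.exists_mem_unitaryGroup_mulVec_eq {𝕜 ι : Type*} [RCLike 𝕜]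
    [Fintype ι] [DecidableEq ι] (U : EuclideanSpace 𝕜 ι ≃ₗᵢ[𝕜] EuclideanSpace 𝕜 ι) :
    ∃ M ∈ unitaryGroup ι 𝕜, ∀ v, M *ᵥ v = (U (WithLp.toLp 2 v)).ofLp := by
  set b := (EuclideanSpace.basisFun ι 𝕜).toBasis
  refine ⟨LinearMap.toMatrix b b U.toLinearEquiv.toLinearMap,
    U.toMatrix_mem_unitaryGroup _ _, fun v => ?_⟩
  change (toEuclideanLin _ (WithLp.toLp 2 v)).ofLp = _
  rw [toEuclideanLin_eq_toLin_orthonormal, toLin_toMatrix]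
  rfl

theorem dotProduct_star_dite_lt {R : Type*} [CommSemiring R] [StarRing R] {a b : ℕ}
    (hab : b ≤ a) (u v : Fin b → R) :
    (fun i : Fin a => if h : i.val < b then u ⟨i.val, h⟩ else 0) ⬝ᵥ
      star (fun i : Fin a => if h : i.val < b then v ⟨i.val, h⟩ else 0) = u ⬝ᵥ star v := by
  refine (Fintype.sum_of_injective (Fin.castLE hab) (Fin.castLE_injective hab) _ _ ?_ ?_).symm
  · rintro i hi
    have : ¬ i.val < b := fun h => hi ⟨⟨i.val, h⟩, rfl⟩
    simp [this]
  · intro j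
    simp

theorem stmt9_general (n a b : ℕ) (hab : b ≤ a)
    (D : Set (Fin n → ℂ)) (hD : IsOpen D) (hDconn : IsConnected D)
    (f : (Fin n → ℂ) → (Fin a → ℂ)) (g : (Fin n → ℂ) → (Fin b → ℂ))
    (hf : DifferentiableOn ℂ f D) (hg : DifferentiableOn ℂ g D)
    (hsum : ∀ z ∈ D,
      (∑ i : Fin a, ‖f z i‖ ^ 2) = ∑ j : Fin b, ‖g z j‖ ^ 2) :
    ∃ U : Matrix (Fin a) (Fin a) ℂ, U ∈ Matrix.unitaryGroup (Fin a) ℂ ∧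
      ∀ z ∈ D, f z = U.mulVec
        (fun i : Fin a => if h : i.val < b then g z ⟨i.val, h⟩ else 0) := by
  have hdiag : ∀ z ∈ D, f z ⬝ᵥ star (f z) = g z ⬝ᵥ star (g z) := fun z hz => by
    simp only [dotProduct, Pi.star_apply, RCLike.star_def, Complex.mul_conj']
    exact_mod_cast hsum z hz
  set pad : (Fin b → ℂ) → Fin a → ℂ := fun v i => if h : i.val < b then v ⟨i.val, h⟩ else 0
  obtain ⟨U, hU⟩ := exists_linearIsometryEquiv_apply_eq_of_inner_eq (𝕜 := ℂ)
    (u := fun z : D => WithLp.toLp 2 (f z)) (v := fun z : D => WithLp.toLp 2 (pad (g z)))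
    fun z w => by
      simp only [EuclideanSpace.inner_toLp_toLp, pad, dotProduct_star_dite_lt hab,
        dotProduct_star_eq_of_isPreconnected hD hDconn.isPreconnected hf hg hdiag w.2 z.2]
  obtain ⟨M, hM, hMU⟩ := U.exists_mem_unitaryGroup_mulVec_eq
  exact ⟨M, hM, fun z hz => by rw [hMU, hU ⟨z, hz⟩]⟩

/-- Let `D ⊆ ℂ^n` be a nonempty connected open set, let `a ≥ b ≥ 1` be
integers, and let `f : D → ℂ^a`, `g : D → ℂ^b` be holomorphic maps such that
`∑_{i} |f i (z)|² = ∑_{j} |g j (z)|²` on `D`.  Then there is a unitary `a × a` matrix `U`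
with `f(z) = U ⬝ (g(z), 0, …, 0)ᵀ` on `D`. -/
theorem stmt9 (n a b : ℕ) (hb : 1 ≤ b) (hab : b ≤ a)
    (D : Set (Fin n → ℂ)) (hD : IsOpen D) (hDne : D.Nonempty) (hDconn : IsConnected D)
    (f : (Fin n → ℂ) → (Fin a → ℂ)) (g : (Fin n → ℂ) → (Fin b → ℂ))
    (hf : DifferentiableOn ℂ f D) (hg : DifferentiableOn ℂ g D)
    (hsum : ∀ z ∈ D,
      (∑ i : Fin a, ‖f z i‖ ^ 2) = ∑ j : Fin b, ‖g z j‖ ^ 2) :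
    ∃ U : Matrix (Fin a) (Fin a) ℂ, U ∈ Matrix.unitaryGroup (Fin a) ℂ ∧
      ∀ z ∈ D, f z = U.mulVec
        (fun i : Fin a => if h : i.val < b then g z ⟨i.val, h⟩ else 0) :=
  stmt9_general n a b hab D hD hDconn f g hf hg hsum
end

section
/- Let n ≥ 1, 1 ≤ ℓ ≤ n/2, m ≥ 1 and N₀ ≥ n be integers, and for k = ℓ+1, …, N₀+1 let Q_k : ℂ^{n+1−ℓ} → ℂ be polynomial maps such that the (N₀+1−ℓ) × (n+1−ℓ) Jacobian matrix (∂Q_k/∂z_j) has rank n+1−ℓ at some point of ℂ^{n+1−ℓ}. Then the complement in ℂ^{n+1} of the domain Ω₀ = {z ∈ ℂ^{n+1} : −Σ_{i=1}^{ℓ} |z_i|^{2m} + Σ_{k=ℓ+1}^{N₀+1} |Q_k(z_{ℓ+1}, …, z_{n+1})|² < 1} has nonempty interior; in particular Ω₀ ≠ ℂ^{n+1}. -/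
/-!
The rank condition makes some entry `∂Q_k/∂z_j` of the Jacobian nonzero at a point, so the
restriction of `Q_k` to the coordinate line through that point in direction `z_j` is a nonconstant
polynomial in one variable and therefore takes the value `2`. At the point whose first `ℓ`
coordinates vanish and whose remaining coordinates are such a preimage, the defining function
of `Ω₀` is at least `4`, and by continuity it stays above `1` on a neighbourhood.
-/

namespace MvPolynomial

open Polynomial

variable {R σ : Type*} [CommSemiring R] [DecidableEq σ]

noncomputable def lineRestriction (z : σ → R) (j : σ) : MvPolynomial σ R →ₐ[R] R[X] :=
  aeval (Function.update (Polynomial.C ∘ z) j Polynomial.X)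

theorem eval_lineRestriction (z : σ → R) (j : σ) (p : MvPolynomial σ R) (t : R) :
    (lineRestriction z j p).eval t = eval (Function.update z j t) p := by
  rw [lineRestriction, aeval_def, polynomial_eval_eval₂]
  congr
  · ext; simp
  · ext i; rcases eq_or_ne i j with rfl | h <;> simp [*]

theorem derivative_lineRestriction (z : σ → R) (j : σ) (p : MvPolynomial σ R) :
    derivative (lineRestriction z j p) = lineRestriction z j (pderiv j p) := by
  induction p using MvPolynomial.induction_on with
  | C a => simp
  | add p q hp hq => simp [hp, hq]
  | mul_X p i hp =>
    have hX : derivative (lineRestriction z j (X i)) = lineRestriction z j (pderiv j (X i)) := by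
      rcases eq_or_ne i j with rfl | h <;> simp [lineRestriction, *]
    rw [map_mul, derivative_mul, hp, hX, Derivation.leibniz, smul_eq_mul, smul_eq_mul, map_add,
      map_mul, map_mul]
    ring

theorem surjective_eval_of_eval_pderiv_ne_zero {K : Type*} [Field K] [IsAlgClosed K]
    {p : MvPolynomial σ K} {z : σ → K} {j : σ} (h : eval z (pderiv j p) ≠ 0) :
    Function.Surjective fun x => eval x p := by
  have hdeg : (lineRestriction z j p).natDegree ≠ 0 := by
    intro h0
    apply h
    rw [← Function.update_eq_self j z, ← eval_lineRestriction, ← derivative_lineRestriction,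
      derivative_of_natDegree_zero h0, Polynomial.eval_zero]
  intro c
  obtain ⟨t, ht⟩ := IsAlgClosed.eval_surjective hdeg c
  exact ⟨_, (eval_lineRestriction z j p t).symm.trans ht⟩

end MvPolynomial

theorem nonempty_interior_compl_setOf_lt_and_ne_univ {X : Type*} [TopologicalSpace X]
    {f : X → ℝ} {c : ℝ} {x : X} (hf : Continuous f) (hx : c < f x) :
    (interior {y | f y < c}ᶜ).Nonempty ∧ {y | f y < c} ≠ Set.univ := by
  have hsub : {y | c < f y} ⊆ {y | f y < c}ᶜ := fun y (hy : c < f y) => (lt_asymm hy : ¬ f y < c)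
  have hint : (interior {y | f y < c}ᶜ).Nonempty :=
    ⟨x, interior_maximal hsub (isOpen_lt continuous_const hf) hx⟩
  exact ⟨hint, fun h => by simp [h] at hint⟩

open MvPolynomial

/-- Let `n ≥ 1`, `1 ≤ ℓ ≤ n/2`, `m ≥ 1`, `N₀ ≥ n` be integers and, for
`k = ℓ+1, …, N₀+1`, let `Q k : ℂ^{n+1-ℓ} → ℂ` be polynomial maps whose
`(N₀+1-ℓ) × (n+1-ℓ)` Jacobian matrix `(∂Q_k/∂z_j)` has rank `n+1-ℓ` at some point.
Then the complement in `ℂ^{n+1}` of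
`Ω₀ = {z : -∑_{i=1}^{ℓ} |z i|^{2m} + ∑_k |Q k (z_{ℓ+1}, …, z_{n+1})|² < 1}`
has nonempty interior; in particular `Ω₀ ≠ ℂ^{n+1}`.
(The affine coordinates `z_1, …, z_{n+1}` are indexed by `Fin (n+1)`, so `z_1, …, z_ℓ`
are the coordinates with index `< ℓ` and `z_{ℓ+1}, …, z_{n+1}` those with index `≥ ℓ`.) -/
theorem stmt11 (n ℓ m N₀ : ℕ) (hℓn : 2 * ℓ ≤ n) (hm : 1 ≤ m)
    (Q : Fin (N₀ + 1 - ℓ) → MvPolynomial (Fin (n + 1 - ℓ)) ℂ)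
    (hrank : ∃ z : Fin (n + 1 - ℓ) → ℂ,
      (Matrix.of fun (k : Fin (N₀ + 1 - ℓ)) (j : Fin (n + 1 - ℓ)) =>
        MvPolynomial.eval z (MvPolynomial.pderiv j (Q k))).rank = n + 1 - ℓ) :
    (interior {z : Fin (n + 1) → ℂ |
        -(∑ i : Fin (n + 1), if i.val < ℓ then ‖z i‖ ^ (2 * m) else 0)
          + (∑ k : Fin (N₀ + 1 - ℓ), ‖(MvPolynomial.eval
              (fun j : Fin (n + 1 - ℓ) => z ⟨ℓ + j.val, by have := j.isLt; omega⟩)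
              (Q k))‖ ^ 2) < 1}ᶜ).Nonempty ∧
      {z : Fin (n + 1) → ℂ |
        -(∑ i : Fin (n + 1), if i.val < ℓ then ‖z i‖ ^ (2 * m) else 0)
          + (∑ k : Fin (N₀ + 1 - ℓ), ‖(MvPolynomial.eval
              (fun j : Fin (n + 1 - ℓ) => z ⟨ℓ + j.val, by have := j.isLt; omega⟩)
              (Q k))‖ ^ 2) < 1} ≠ Set.univ := by
  obtain ⟨z₀, hz₀⟩ := hrank
  obtain ⟨k₀, j₀, hk₀⟩ : ∃ k j, eval z₀ (pderiv j (Q k)) ≠ 0 := by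
    by_contra! h
    rw [show Matrix.of (fun k j => eval z₀ (pderiv j (Q k))) = 0 from Matrix.ext h,
      Matrix.rank_zero] at hz₀
    omega
  obtain ⟨w, hw : eval w (Q k₀) = 2⟩ := surjective_eval_of_eval_pderiv_ne_zero hk₀ 2
  let z : Fin (n + 1) → ℂ := fun i => if h : ℓ ≤ i then w ⟨i - ℓ, by omega⟩ else 0
  have hz_tail : (fun j : Fin (n + 1 - ℓ) => z ⟨ℓ + j, by omega⟩) = w := by
    funext j; simp [z]
  have hz_head : ∀ i : Fin (n + 1), (if i.val < ℓ then ‖z i‖ ^ (2 * m) else 0) = 0 := by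
    intro i
    split_ifs with h
    · simp [z, not_le.2 h, show m ≠ 0 by omega]
    · rfl
  have hcont_head : Continuous fun z : Fin (n + 1) → ℂ =>
      ∑ i : Fin (n + 1), if i.val < ℓ then ‖z i‖ ^ (2 * m) else 0 :=
    continuous_finsetSum _ fun i _ => by split_ifs <;> fun_prop
  refine nonempty_interior_compl_setOf_lt_and_ne_univ (x := z)
    (hcont_head.neg.add <| continuous_finsetSum _ fun k _ =>
      ((continuous_eval (Q k)).comp (by fun_prop)).norm.pow 2) ?_
  calc (1 : ℝ) < ‖eval w (Q k₀)‖ ^ 2 := by rw [hw]; norm_num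
    _ ≤ _ := by
      simp only [hz_head, Finset.sum_const_zero, neg_zero, zero_add, hz_tail]
      exact Finset.single_le_sum (fun k _ => sq_nonneg ‖eval w (Q k)‖) (Finset.mem_univ k₀)
end
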